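/- arXiv:2510.13687 — 4 statements merged into one kernel-verified Lean document; each statement's English description precedes it below -/
import Mathlib

section
/- Let R be a commutative ring and Q an R-module equipped with an alternating, strongly nondegenerate bilinear form ω (so (Q, ω) is a symplectic module). If there exists a surjective R-linear map φ : Q → R (equivalently, Q splits off a free rank-1 direct summand as an R-module), then there exist elements α, β ∈ Q and a submodule Q' of Q such that: ω(α, β) = 1; the submodule N = span_R{α, β} and Q' are complementary (N ∩ Q' = 0 and N + Q' = Q); ω(α, x) = 0 and ω(β, x) = 0 for every x ∈ Q'; and the restriction of ω to Q' is strongly nondegenerate, i.e., the map Q' → Dual_R(Q') induced by x ↦ ω(x, −)|_{Q'} is bijective. In other words, Q splits off a hyperbolic plane as a symplectic R-module. -/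
/-- **Splitting off a hyperbolic plane.**
Let `R` be a commutative ring and `Q` an `R`-module equipped with an alternating,
strongly nondegenerate bilinear form `ω` (so `(Q, ω)` is a symplectic module).
If there exists a surjective `R`-linear map `φ : Q → R`, then there exist `α, β ∈ Q`
and a submodule `Q'` of `Q` such that `ω α β = 1`, the span of `{α, β}` and `Q'` are
complementary, `ω α x = 0` and `ω β x = 0` for all `x ∈ Q'`, and the restriction of
`ω` to `Q'` is strongly nondegenerate. -/
theorem symplectic_splits_hyperbolic_plane
    (R : Type*) [CommRing R] (Q : Type*) [AddCommGroup Q] [Module R Q]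
    (ω : Q →ₗ[R] Q →ₗ[R] R)
    (halt : ∀ x : Q, ω x x = 0)
    (hnd : Function.Bijective ω)
    (φ : Q →ₗ[R] R) (hφ : Function.Surjective φ) :
    ∃ (α β : Q) (Q' : Submodule R Q),
      ω α β = 1 ∧
      IsCompl (Submodule.span R {α, β}) Q' ∧
      (∀ x ∈ Q', ω α x = 0 ∧ ω β x = 0) ∧
      Function.Bijective (ω.domRestrict₁₂ Q' Q') := by
  -- skew-symmetry
  have hskew : ∀ x y : Q, ω x y = - ω y x := by
    intro x y
    have h := halt (x + y)
    simp only [map_add, LinearMap.add_apply, halt x, halt y] at h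
    linear_combination h
  obtain ⟨β, hβ⟩ := hφ 1
  obtain ⟨α, hα⟩ := hnd.surjective φ
  have hαβ : ω α β = 1 := by rw [hα]; exact hβ
  have hβα : ω β α = -1 := by rw [hskew, hαβ]
  set Q' : Submodule R Q := LinearMap.ker (ω α) ⊓ LinearMap.ker (ω β) with hQ'
  have hmemQ' : ∀ x : Q, x ∈ Q' ↔ ω α x = 0 ∧ ω β x = 0 := by
    intro x
    simp [hQ', Submodule.mem_inf, LinearMap.mem_ker]
  -- the projection
  set p : Q →ₗ[R] Q := (ω α).smulRight β - (ω β).smulRight α with hp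
  have hpx : ∀ x : Q, p x = (ω α x) • β - (ω β x) • α := by
    intro x; simp [hp]
  set π : Q →ₗ[R] Q := LinearMap.id - p with hπ
  have hπx : ∀ x : Q, π x = x - p x := by intro x; simp [hπ]
  have hπmem : ∀ x : Q, π x ∈ Q' := by
    intro x
    rw [hmemQ', hπx, hpx]
    constructor
    · simp [map_sub, map_smul, hαβ, halt α, smul_eq_mul]
    · simp [map_sub, map_smul, hβα, halt β, smul_eq_mul]
  have hpspan : ∀ x : Q, p x ∈ Submodule.span R {α, β} := by
    intro x
    rw [hpx]
    exact Submodule.sub_mem _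
      (Submodule.smul_mem _ _ (Submodule.subset_span (by simp)))
      (Submodule.smul_mem _ _ (Submodule.subset_span (by simp)))
  have hpQ' : ∀ x ∈ Q', p x = 0 := by
    intro x hx
    rw [hmemQ'] at hx
    rw [hpx, hx.1, hx.2]; simp
  have hπQ' : ∀ x ∈ Q', π x = x := by
    intro x hx; rw [hπx, hpQ' x hx]; simp
  refine ⟨α, β, Q', hαβ, ?_, fun x hx => (hmemQ' x).mp hx, ?_, ?_⟩
  · constructor
    · rw [disjoint_iff_inf_le]
      intro x hx
      obtain ⟨hx1, hx2⟩ := Submodule.mem_inf.mp hx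
      obtain ⟨a, b, rfl⟩ := Submodule.mem_span_pair.mp hx1
      rw [hmemQ'] at hx2
      obtain ⟨h1, h2⟩ := hx2
      simp only [map_add, map_smul, LinearMap.add_apply, LinearMap.smul_apply,
        halt α, halt β, hαβ, hβα, smul_eq_mul, mul_zero, mul_one, mul_neg_one,
        zero_add, add_zero] at h1 h2
      simp only [Submodule.mem_bot]
      rw [h1, neg_eq_zero.mp h2]
      simp
    · rw [codisjoint_iff_le_sup]
      intro x _
      have : x = p x + π x := by rw [hπx]; abel
      rw [this]
      exact Submodule.add_mem _ (Submodule.mem_sup_left (hpspan x))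
        (Submodule.mem_sup_right (hπmem x))
  · -- injective
    rintro ⟨x, hx⟩ ⟨y, hy⟩ h
    have hxy : ω x = ω y := by
      ext z
      have hz : z = p z + π z := by rw [hπx]; abel
      have h1 : ω x (π z) = ω y (π z) := by
        have := LinearMap.congr_fun h ⟨π z, hπmem z⟩
        exact this
      have h2 : ω x (p z) = ω y (p z) := by
        rw [hmemQ'] at hx hy
        have hxα : ω x α = 0 := by rw [hskew, hx.1]; ring
        have hxβ : ω x β = 0 := by rw [hskew, hx.2]; ring
        have hyα : ω y α = 0 := by rw [hskew, hy.1]; ring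
        have hyβ : ω y β = 0 := by rw [hskew, hy.2]; ring
        simp [hpx, map_sub, map_smul, hxα, hxβ, hyα, hyβ]
      rw [hz]
      simp only [map_add]
      rw [h1, h2]
    exact Subtype.ext (hnd.injective hxy)
  · -- surjective
    intro f
    obtain ⟨x, hx⟩ := hnd.surjective (f.comp (π.codRestrict Q' hπmem))
    refine ⟨⟨π x, hπmem x⟩, ?_⟩
    ext y
    have h1 : ω (π x) y = ω x y := by
      rw [hπx, map_sub, LinearMap.sub_apply]
      have : ω (p x) (y : Q) = 0 := by
        have hy := (hmemQ' y).mp y.2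
        have h1 : ω β (y : Q) = 0 := hy.2
        have h2 : ω α (y : Q) = 0 := hy.1
        simp [hpx, map_sub, map_smul, h1, h2]
      rw [this, sub_zero]
    have h2 : ω x (y : Q) = f y := by
      rw [hx]
      simp only [LinearMap.comp_apply, LinearMap.codRestrict_apply]
      congr 1
      exact Subtype.ext (hπQ' y y.2)
    simp only [LinearMap.domRestrict₁₂]
    show ω (π x) (y : Q) = f y
    rw [h1, h2]
end

section
/- Let R be a commutative ring and Q an R-module equipped with an alternating, strongly nondegenerate bilinear form ω. If there exists a surjective R-linear map φ : Q → R, then there exist an R-module Q', an alternating, strongly nondegenerate bilinear form ω' on Q', and an R-linear equivalence f : Q ≃ (R × R) × Q' such that for all x, y ∈ Q, writing f(x) = ((x₁, x₂), x') and f(y) = ((y₁, y₂), y'), one has ω(x, y) = x₁·y₂ − x₂·y₁ + ω'(x', y'). That is, (Q, ω) is isomorphic as a symplectic module to the orthogonal direct sum of the standard hyperbolic plane and a symplectic module (Q', ω'). -/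
universe u v

/-- **Symplectic splitting as an orthogonal direct sum with a hyperbolic plane.**
If `(Q, ω)` is a symplectic `R`-module (alternating and strongly nondegenerate `ω`)
admitting a surjective linear map `φ : Q → R`, then `(Q, ω)` is isomorphic, as a
symplectic module, to the orthogonal direct sum of the standard hyperbolic plane
`(R × R, h)` with `h ((x₁,x₂),(y₁,y₂)) = x₁*y₂ - x₂*y₁` and a symplectic module `(Q', ω')`. -/
theorem symplectic_iso_hyperbolic_plane_prod
    (R : Type u) [CommRing R] (Q : Type v) [AddCommGroup Q] [Module R Q]
    (ω : Q →ₗ[R] Q →ₗ[R] R)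
    (halt : ∀ x : Q, ω x x = 0)
    (hnd : Function.Bijective ω)
    (φ : Q →ₗ[R] R) (hφ : Function.Surjective φ) :
    ∃ (Q' : Type v) (_ : AddCommGroup Q') (_ : Module R Q')
      (ω' : Q' →ₗ[R] Q' →ₗ[R] R),
      (∀ x : Q', ω' x x = 0) ∧
      Function.Bijective ω' ∧
      ∃ f : Q ≃ₗ[R] (R × R) × Q',
        ∀ x y : Q,
          ω x y = (f x).1.1 * (f y).1.2 - (f x).1.2 * (f y).1.1 + ω' (f x).2 (f y).2 := by
  obtain ⟨e, he⟩ := hnd.2 φ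
  obtain ⟨u, hu⟩ := hφ 1
  have heu : ω e u = 1 := by rw [he]; exact hu
  have hskew : ∀ x y : Q, ω y x = - ω x y := by
    intro x y
    have h := halt (x + y)
    simp only [map_add, LinearMap.add_apply, halt x, halt y] at h
    linear_combination h
  have hue : ω u e = -1 := by rw [hskew, heu]
  set K : Submodule R Q := LinearMap.ker ((ω e).prod (ω u)) with hK
  have memK : ∀ x : Q, x ∈ K ↔ ω e x = 0 ∧ ω u x = 0 := by
    intro x
    simp [hK, LinearMap.mem_ker, LinearMap.prod_apply, Prod.ext_iff]
  set p : Q →ₗ[R] Q := LinearMap.id - (ω e).smulRight u + (ω u).smulRight e with hp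
  have hpval : ∀ x : Q, p x = x - (ω e x) • u + (ω u x) • e := by
    intro x
    simp [hp, LinearMap.sub_apply, LinearMap.add_apply, LinearMap.smulRight_apply]
  have hpK : ∀ x : Q, p x ∈ K := by
    intro x
    rw [memK, hpval]
    constructor <;>
      simp [map_add, map_sub, map_smul, heu, hue, halt e, halt u, smul_eq_mul]
  set π : Q →ₗ[R] K := p.codRestrict K hpK with hπ
  have hπval : ∀ x : Q, (π x : Q) = p x := fun x => rfl
  set ω' : K →ₗ[R] K →ₗ[R] R := (ω.domRestrict K).compl₂ K.subtype with hω'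
  have hω'val : ∀ x y : K, ω' x y = ω (x : Q) (y : Q) := fun x y => rfl
  -- key expansion
  have hexp : ∀ z y : Q, ω (p z) y = ω z y - (ω e z) * (ω u y) + (ω u z) * (ω e y) := by
    intro z y
    rw [hpval]
    simp only [map_add, map_sub, map_smul, LinearMap.add_apply, LinearMap.sub_apply,
      LinearMap.smul_apply, smul_eq_mul]
  have hexp₂ : ∀ z y : Q, ω z (p y) = ω z y - (ω e y) * (ω z u) + (ω u y) * (ω z e) := by
    intro z y
    rw [hpval]
    simp only [map_add, map_sub, map_smul, smul_eq_mul]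
  have hinj : Function.Injective ω' := by
    rw [injective_iff_map_eq_zero ω']
    intro x hx
    obtain ⟨hxe, hxu⟩ := (memK (x : Q)).mp x.2
    have hxu' : ω (x : Q) u = 0 := by rw [hskew, hxu, neg_zero]
    have hxe' : ω (x : Q) e = 0 := by rw [hskew, hxe, neg_zero]
    have hωx : ω (x : Q) = 0 := by
      ext y
      have h0 : ω' x ⟨p y, hpK y⟩ = 0 := by rw [hx]; rfl
      have h1 : ω (x : Q) (p y) = 0 := h0
      have h2 := hexp₂ (x : Q) y
      rw [h1, hxu', hxe'] at h2
      have : (0:R) = ω (x:Q) y - ω e y * 0 + ω u y * 0 := h2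
      simpa using this.symm
    have : (x : Q) = 0 := hnd.1 (by rw [hωx, map_zero])
    exact Subtype.ext this
  have hsurj : Function.Surjective ω' := by
    intro g
    obtain ⟨z, hz⟩ := hnd.2 (g.comp π)
    refine ⟨π z, ?_⟩
    ext y
    obtain ⟨hye, hyu⟩ := (memK (y : Q)).mp y.2
    have h1 : ω (p z) (y : Q) = ω z (y : Q) := by
      rw [hexp, hye, hyu]; ring
    have h2 : ω z (y : Q) = g (π (y : Q)) := by rw [hz]; rfl
    have h3 : π (y : Q) = y := by
      apply Subtype.ext
      rw [hπval, hpval, hye, hyu, zero_smul, zero_smul, sub_zero, add_zero]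
    calc ω' (π z) y = ω (p z) (y : Q) := rfl
      _ = g y := by rw [h1, h2, h3]
  -- the linear equivalence
  set F : Q →ₗ[R] (R × R) × K := (LinearMap.prod (-(ω u)) (ω e)).prod π with hF
  set A : ((R × R) × K) →ₗ[R] R :=
    (LinearMap.fst R R R).comp (LinearMap.fst R (R × R) K) with hA
  set B : ((R × R) × K) →ₗ[R] R :=
    (LinearMap.snd R R R).comp (LinearMap.fst R (R × R) K) with hB
  set G : ((R × R) × K) →ₗ[R] Q :=
    B.smulRight u + A.smulRight e + K.subtype.comp (LinearMap.snd R (R × R) K) with hG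
  have hGval : ∀ z : (R × R) × K, G z = z.1.2 • u + z.1.1 • e + (z.2 : Q) := by
    intro z; simp [hG, hA, hB]
  have hFval : ∀ x : Q, F x = ((- ω u x, ω e x), π x) := by
    intro x; simp [hF]
  have hGF : ∀ x : Q, G (F x) = x := by
    intro x
    rw [hFval, hGval]
    simp only [hπval, hpval]
    module
  have hFG : ∀ z : (R × R) × K, F (G z) = z := by
    intro z
    obtain ⟨hze, hzu⟩ := (memK (z.2 : Q)).mp z.2.2
    rw [hGval, hFval]
    have h1 : ω u (z.1.2 • u + z.1.1 • e + (z.2 : Q)) = - z.1.1 := by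
      simp [map_add, map_smul, smul_eq_mul, halt u, hue, hzu]
    have h2 : ω e (z.1.2 • u + z.1.1 • e + (z.2 : Q)) = z.1.2 := by
      simp [map_add, map_smul, smul_eq_mul, halt e, heu, hze]
    have h3 : π (z.1.2 • u + z.1.1 • e + (z.2 : Q)) = z.2 := by
      apply Subtype.ext
      rw [hπval, hpval, h1, h2]
      simp only [neg_smul]
      have hz2 : p (z.2 : Q) = (z.2 : Q) := by
        rw [hpval, hze, hzu, zero_smul, zero_smul, sub_zero, add_zero]
      abel
    rw [h1, h2, h3, neg_neg]
  set f : Q ≃ₗ[R] (R × R) × K :=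
    LinearEquiv.ofLinear F G (LinearMap.ext hFG) (LinearMap.ext hGF) with hf
  refine ⟨K, inferInstance, inferInstance, ω', fun x => halt (x : Q), ⟨hinj, hsurj⟩, f, ?_⟩
  intro x y
  have hfx : f x = ((- ω u x, ω e x), π x) := hFval x
  have hfy : f y = ((- ω u y, ω e y), π y) := hFval y
  rw [hfx, hfy]
  have hcross : ω' (π x) (π y) = ω (p x) (p y) := rfl
  simp only [hcross]
  rw [hexp (x) (p y), hexp₂ x y]
  have hpe : ω e (p y) = 0 := ((memK _).mp (hpK y)).1
  have hpu : ω u (p y) = 0 := ((memK _).mp (hpK y)).2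
  rw [hpe, hpu]
  have h1 : ω x u = - ω u x := hskew u x
  have h2 : ω x e = - ω e x := hskew e x
  rw [h1, h2]
  ring
end

section
/- Let R be a commutative ring and Q an R-module with an alternating bilinear form ω, and let α, β ∈ Q satisfy ω(α, β) = 1. Let N = span_R{α, β}. Then the restriction of ω to N is strongly nondegenerate: the R-linear map N → Dual_R(N) sending x ∈ N to the functional y ↦ ω(x, y) on N is bijective. -/
/-- If `ω` is an alternating bilinear form on an `R`-module `Q` and `α, β ∈ Q` satisfy
`ω α β = 1`, then the restriction of `ω` to `N = span R {α, β}` is strongly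
nondegenerate: the map `N → Dual_R N`, `x ↦ ω(x, −)|_N`, is bijective. -/
theorem span_symplectic_pair_nondegenerate
    (R : Type*) [CommRing R] (Q : Type*) [AddCommGroup Q] [Module R Q]
    (ω : Q →ₗ[R] Q →ₗ[R] R)
    (halt : ∀ x : Q, ω x x = 0)
    (α β : Q) (hαβ : ω α β = 1) :
    Function.Bijective
      (ω.domRestrict₁₂ (Submodule.span R {α, β}) (Submodule.span R {α, β})) := by
  have skew : ∀ x y : Q, ω x y = - ω y x := by
    intro x y
    have h := halt (x + y)
    simp only [map_add, LinearMap.add_apply, halt] at h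
    linear_combination h
  have hβα : ω β α = -1 := by rw [skew β α, hαβ]
  have hα : α ∈ Submodule.span R ({α, β} : Set Q) :=
    Submodule.subset_span (by simp)
  have hβ : β ∈ Submodule.span R ({α, β} : Set Q) :=
    Submodule.subset_span (by simp)
  -- every element of the span has a canonical representation
  have repr : ∀ x ∈ Submodule.span R ({α, β} : Set Q),
      x = ω x β • α - ω x α • β := by
    intro x hx
    induction hx using Submodule.span_induction with
    | mem z hz =>
      rcases hz with hz | hz
      · subst hz; simp [hαβ, halt]
      · simp at hz; subst hz; simp [hβα, halt]
    | zero => simp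
    | add y z hy hz ihy ihz =>
      conv_lhs => rw [ihy, ihz]
      simp only [map_add, LinearMap.add_apply, add_smul]
      abel
    | smul c y hy ihy =>
      conv_lhs => rw [ihy]
      simp only [map_smul, LinearMap.smul_apply, smul_eq_mul, mul_smul, smul_sub]
  constructor
  · intro x y hxy
    have hx := repr x.1 x.2
    have hy := repr y.1 y.2
    have h1 : ∀ z : Q, z ∈ Submodule.span R ({α, β} : Set Q) →
        ω x.1 z = ω y.1 z := by
      intro z hz
      have := congrArg (fun f => f ⟨z, hz⟩) hxy
      exact this
    apply Subtype.ext
    rw [hx, hy, h1 α hα, h1 β hβ]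
  · intro f
    set a : R := f ⟨β, hβ⟩ with ha
    set b : R := f ⟨α, hα⟩ with hb
    have hxmem : a • α - b • β ∈ Submodule.span R ({α, β} : Set Q) :=
      sub_mem (Submodule.smul_mem _ _ hα) (Submodule.smul_mem _ _ hβ)
    refine ⟨⟨a • α - b • β, hxmem⟩, ?_⟩
    apply LinearMap.ext
    intro y
    have hy : y = (ω y.1 β) • (⟨α, hα⟩ : Submodule.span R ({α, β} : Set Q))
        - (ω y.1 α) • ⟨β, hβ⟩ := by
      apply Subtype.ext
      simpa using repr y.1 y.2
    have lhs : (ω.domRestrict₁₂ (Submodule.span R {α, β}) (Submodule.span R {α, β}))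
        ⟨a • α - b • β, hxmem⟩ y = ω (a • α - b • β) y.1 := rfl
    rw [lhs]
    conv_rhs => rw [hy]
    simp only [map_sub, map_smul, LinearMap.sub_apply, LinearMap.smul_apply, smul_eq_mul,
      ← ha, ← hb]
    rw [skew α y.1, skew β y.1]
    have h1 : ω y.1 α = (ω y.1 β) * ω α α - (ω y.1 α) * ω β α := by
      conv_lhs => rw [repr y.1 y.2]
      simp [halt]
    have h2 : ω y.1 β = (ω y.1 β) * ω α β - (ω y.1 α) * ω β β := by
      conv_lhs => rw [repr y.1 y.2]
      simp [halt]
    rw [show ω y.1 α = (ω y.1 α : R) from rfl]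
    simp [halt, hαβ, hβα]
    ring
end

section
/- Let R be a commutative ring and Q an R-module with an alternating, strongly nondegenerate bilinear form ω, and let α, β ∈ Q satisfy ω(α, β) = 1. Let N = span_R{α, β} and let N^⊥ = {x ∈ Q : ω(α, x) = 0 and ω(β, x) = 0} be its ω-orthogonal complement. Then the restriction of ω to N^⊥ is strongly nondegenerate: the R-linear map N^⊥ → Dual_R(N^⊥) sending x ∈ N^⊥ to the functional y ↦ ω(x, y) on N^⊥ is bijective. In particular, the ω-complement of the hyperbolic plane generated by α and β is again a symplectic module. -/
/-- If `ω` is an alternating, strongly nondegenerate bilinear form on an `R`-module `Q`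
and `α, β ∈ Q` satisfy `ω α β = 1`, then the restriction of `ω` to the `ω`-orthogonal
complement `N^⊥ = {x : ω α x = 0 ∧ ω β x = 0} = ker (ω α) ⊓ ker (ω β)` of
`N = span R {α, β}` is strongly nondegenerate: the map `N^⊥ → Dual_R N^⊥`,
`x ↦ ω(x, −)|_{N^⊥}`, is bijective. -/
theorem orthogonal_of_symplectic_pair_nondegenerate
    (R : Type*) [CommRing R] (Q : Type*) [AddCommGroup Q] [Module R Q]
    (ω : Q →ₗ[R] Q →ₗ[R] R)
    (halt : ∀ x : Q, ω x x = 0)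
    (hnd : Function.Bijective ω)
    (α β : Q) (hαβ : ω α β = 1) :
    Function.Bijective
      (ω.domRestrict₁₂ (LinearMap.ker (ω α) ⊓ LinearMap.ker (ω β))
        (LinearMap.ker (ω α) ⊓ LinearMap.ker (ω β))) := by
  set P := LinearMap.ker (ω α) ⊓ LinearMap.ker (ω β) with hPdef
  have skew : ∀ x y : Q, ω y x = - ω x y := by
    intro x y
    have h := halt (x + y)
    simp only [map_add, LinearMap.add_apply, halt x, halt y, zero_add, add_zero] at h
    linear_combination h
  have hβα : ω β α = -1 := by rw [skew α β, hαβ]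
  have hmem : ∀ z : Q, z - ω α z • β + ω β z • α ∈ P := by
    intro z
    refine Submodule.mem_inf.mpr ⟨?_, ?_⟩ <;>
      simp only [LinearMap.mem_ker, map_sub, map_add, map_smul, smul_eq_mul,
        halt, hαβ, hβα] <;> ring
  -- the projection onto P
  have hproj : ∀ z : Q, z ∈ P → z - ω α z • β + ω β z • α = z := by
    intro z hz
    obtain ⟨h1, h2⟩ := Submodule.mem_inf.mp hz
    rw [LinearMap.mem_ker] at h1 h2
    rw [h1, h2, zero_smul, zero_smul, sub_zero, add_zero]
  set F := ω.domRestrict₁₂ P P with hF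
  constructor
  · rw [injective_iff_map_eq_zero]
    intro x hx
    have hxP := x.2
    obtain ⟨hx1, hx2⟩ := Submodule.mem_inf.mp hxP
    rw [LinearMap.mem_ker] at hx1 hx2
    have hxQ : ω (x : Q) = 0 := by
      ext z
      have h0 : F x ⟨z - ω α z • β + ω β z • α, hmem z⟩ = 0 := by rw [hx]; rfl
      have hxα : ω (x : Q) α = 0 := by rw [skew, hx1, neg_zero]
      have hxβ : ω (x : Q) β = 0 := by rw [skew, hx2, neg_zero]
      simp only [hF, LinearMap.domRestrict₁₂_apply, map_sub, map_add, map_smul,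
        smul_eq_mul, hxα, hxβ, mul_zero, sub_zero, add_zero] at h0
      simpa using h0
    have : (x : Q) = 0 := hnd.1 (by rw [hxQ, map_zero])
    exact Subtype.ext this
  · intro f
    -- the projection as a linear map
    let π : Q →ₗ[R] P :=
      { toFun := fun z => ⟨z - ω α z • β + ω β z • α, hmem z⟩
        map_add' := by
          intro a b
          ext
          simp only [map_add, Submodule.coe_add, add_smul]
          abel
        map_smul' := by
          intro c a
          ext
          simp only [map_smul, RingHom.id_apply, SetLike.val_smul, smul_eq_mul,
            mul_smul, smul_sub, smul_add] }
    obtain ⟨x, hx⟩ := hnd.2 (f.comp π)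
    refine ⟨⟨x - ω α x • β + ω β x • α, hmem x⟩, ?_⟩
    ext y
    obtain ⟨hy1, hy2⟩ := Submodule.mem_inf.mp y.2
    rw [LinearMap.mem_ker] at hy1 hy2
    have hωxy : ω x (y : Q) = f y := by
      have := congrArg (fun g => g (y : Q)) hx
      simp only [LinearMap.comp_apply] at this
      rw [this]
      congr 1
      exact Subtype.ext (hproj _ y.2)
    simp only [hF, LinearMap.domRestrict₁₂_apply, map_sub, map_add, LinearMap.sub_apply,
      LinearMap.add_apply, LinearMap.smul_apply, smul_eq_mul, hy1, hy2, mul_zero,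
      sub_zero, add_zero, map_smul, hωxy]
end
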